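/- Let R^{H,K}(s,t) = 2^{−K}((s^{2H}+t^{2H})^K − |s−t|^{2HK}) be the covariance of two-parameter fractional Brownian motion with H, K ∈ (0,1), restricted via τ(t) = (T_2−T_1)t + T_1 to r(s,t) = R^{H,K}(τ(s), τ(t)) with 0 < T_1 < T_2. Then there exists a constant M such that for all sufficiently small h > 0, sup_{h ≤ t ≤ 1−h} | h^{−2HK} (δ_1^h ∘ δ_2^h r)(t,t) − (T_2−T_1)^{2HK} (4 − 2^{2HK}) 2^{1−K} | ≤ M h^{4−2HK}. -/

import Mathlib

/-- Covariance of two-parameter (bifractional) Brownian motion. -/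
noncomputable def bifbmCov (H K : ℝ) (s t : ℝ) : ℝ :=
  (2 : ℝ) ^ (-K) * ((s ^ (2 * H) + t ^ (2 * H)) ^ K - |s - t| ^ (2 * H * K))

/-- The rescaled covariance `r(s,t) = R^{H,K}(τ(s), τ(t))` with
`τ(t) = (T₂ - T₁) t + T₁`. -/
noncomputable def bifbmCovRescaled (H K T₁ T₂ : ℝ) (s t : ℝ) : ℝ :=
  bifbmCov H K ((T₂ - T₁) * s + T₁) ((T₂ - T₁) * t + T₁)

/-- Second-order difference operator in the first variable. -/
noncomputable def delta1 (f : ℝ → ℝ → ℝ) (h s t : ℝ) : ℝ :=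
  f (s + h) t + f (s - h) t - 2 * f s t

/-- Second-order difference operator in the second variable. -/
noncomputable def delta2 (f : ℝ → ℝ → ℝ) (h s t : ℝ) : ℝ :=
  f s (t + h) + f s (t - h) - 2 * f s t

open Real Set

/-! ### Auxiliary smooth part and its derivatives -/

noncomputable def Wf (H c d u v : ℝ) : ℝ := (c*u+d) ^ (2*H) + (c*v+d) ^ (2*H)
noncomputable def gsm (H K c d u v : ℝ) : ℝ := (2:ℝ) ^ (-K) * (Wf H c d u v) ^ K
noncomputable def ps1 (H c d x : ℝ) : ℝ := 2*H * (c*x+d) ^ (2*H-1) * c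
noncomputable def ps2 (H c d x : ℝ) : ℝ := 2*H * ((2*H-1) * (c*x+d) ^ (2*H-2) * c) * c
noncomputable def ph1 (K y : ℝ) : ℝ := (2:ℝ)^(-K) * (K * y^(K-1))
noncomputable def ph2 (K y : ℝ) : ℝ := (2:ℝ)^(-K) * (K * ((K-1) * y^(K-2)))
noncomputable def ph3 (K y : ℝ) : ℝ := (2:ℝ)^(-K) * (K * ((K-1) * ((K-2) * y^(K-3))))
noncomputable def ph4 (K y : ℝ) : ℝ := (2:ℝ)^(-K) * (K * ((K-1) * ((K-2) * ((K-3) * y^(K-4)))))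

noncomputable def g10 (H K c d u v : ℝ) : ℝ := ph1 K (Wf H c d u v) * ps1 H c d u
noncomputable def g20 (H K c d u v : ℝ) : ℝ :=
  ph2 K (Wf H c d u v) * (ps1 H c d u)^2 + ph1 K (Wf H c d u v) * ps2 H c d u
noncomputable def g21 (H K c d u v : ℝ) : ℝ :=
  ph3 K (Wf H c d u v) * ps1 H c d v * (ps1 H c d u)^2
    + ph2 K (Wf H c d u v) * ps1 H c d v * ps2 H c d u
noncomputable def g22 (H K c d u v : ℝ) : ℝ :=
  ph4 K (Wf H c d u v) * (ps1 H c d v)^2 * (ps1 H c d u)^2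
    + ph3 K (Wf H c d u v) * ps2 H c d v * (ps1 H c d u)^2
    + ph3 K (Wf H c d u v) * (ps1 H c d v)^2 * ps2 H c d u
    + ph2 K (Wf H c d u v) * ps2 H c d v * ps2 H c d u

lemma hasDerivAt_affine_rpow (c d p x : ℝ) (hx : c * x + d ≠ 0) :
    HasDerivAt (fun y : ℝ => (c*y+d) ^ p) (p * (c*x+d) ^ (p-1) * c) x := by
  have h1 : HasDerivAt (fun y : ℝ => c*y+d) c x := by
    simpa using ((hasDerivAt_id x).const_mul c).add_const d
  simpa [Function.comp_def] using (Real.hasDerivAt_rpow_const (p := p) (Or.inl hx)).comp x h1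

section derivs
variable {H K c d u v : ℝ}

lemma hasDerivAt_Wf_u (hu : c*u+d ≠ 0) :
    HasDerivAt (fun x => Wf H c d x v) (ps1 H c d u) u := by
  simpa [Wf, ps1] using (hasDerivAt_affine_rpow c d (2*H) u hu).add_const ((c*v+d) ^ (2*H))

lemma hasDerivAt_Wf_v (hv : c*v+d ≠ 0) :
    HasDerivAt (fun y => Wf H c d u y) (ps1 H c d v) v := by
  simpa [Wf, ps1] using (hasDerivAt_affine_rpow c d (2*H) v hv).const_add ((c*u+d) ^ (2*H))

lemma hasDerivAt_ps1 (hu : c*u+d ≠ 0) :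
    HasDerivAt (fun x => ps1 H c d x) (ps2 H c d u) u := by
  have h := ((hasDerivAt_affine_rpow c d (2*H-1) u hu).const_mul (2*H)).mul_const c
  rw [show (2*H-1-1 : ℝ) = 2*H-2 by ring] at h
  exact h

lemma hasDerivAt_ph1 {y : ℝ} (hy : y ≠ 0) : HasDerivAt (ph1 K) (ph2 K y) y := by
  have h := ((Real.hasDerivAt_rpow_const (p := K-1) (Or.inl hy)).const_mul K).const_mul ((2:ℝ)^(-K))
  rw [show (K-1-1 : ℝ) = K-2 by ring] at h
  exact h

lemma hasDerivAt_ph2 {y : ℝ} (hy : y ≠ 0) : HasDerivAt (ph2 K) (ph3 K y) y := by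
  have h := (((Real.hasDerivAt_rpow_const (p := K-2) (Or.inl hy)).const_mul (K-1)).const_mul K).const_mul ((2:ℝ)^(-K))
  rw [show (K-2-1 : ℝ) = K-3 by ring] at h
  exact h

lemma hasDerivAt_ph3 {y : ℝ} (hy : y ≠ 0) : HasDerivAt (ph3 K) (ph4 K y) y := by
  have h := ((((Real.hasDerivAt_rpow_const (p := K-3) (Or.inl hy)).const_mul (K-2)).const_mul (K-1)).const_mul K).const_mul ((2:ℝ)^(-K))
  rw [show (K-3-1 : ℝ) = K-4 by ring] at h
  exact h

lemma hasDerivAt_gsm_u (hu : c*u+d ≠ 0) (hW : Wf H c d u v ≠ 0) :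
    HasDerivAt (fun x => gsm H K c d x v) (g10 H K c d u v) u := by
  have houter : HasDerivAt (fun y : ℝ => (2:ℝ)^(-K) * y ^ K) (ph1 K (Wf H c d u v)) (Wf H c d u v) := by
    simpa [ph1] using (Real.hasDerivAt_rpow_const (p := K) (Or.inl hW)).const_mul ((2:ℝ)^(-K))
  simpa [gsm, g10, Function.comp_def] using houter.comp u (hasDerivAt_Wf_u hu)

lemma hasDerivAt_g10_u (hu : c*u+d ≠ 0) (hW : Wf H c d u v ≠ 0) :
    HasDerivAt (fun x => g10 H K c d x v) (g20 H K c d u v) u := by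
  have hA : HasDerivAt (fun x => ph1 K (Wf H c d x v)) (ph2 K (Wf H c d u v) * ps1 H c d u) u :=
    by have := (hasDerivAt_ph1 (K := K) hW).comp u (hasDerivAt_Wf_u (H := H) (v := v) hu); exact this
  have h := hA.mul (hasDerivAt_ps1 (H := H) hu)
  exact h.congr_deriv (by simp only [g20]; ring)

lemma hasDerivAt_g20_v (hv : c*v+d ≠ 0) (hW : Wf H c d u v ≠ 0) :
    HasDerivAt (fun y => g20 H K c d u y) (g21 H K c d u v) v := by
  have hA : HasDerivAt (fun y => ph2 K (Wf H c d u y)) (ph3 K (Wf H c d u v) * ps1 H c d v) v :=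
    (hasDerivAt_ph2 hW).comp v (hasDerivAt_Wf_v hv)
  have hB : HasDerivAt (fun y => ph1 K (Wf H c d u y)) (ph2 K (Wf H c d u v) * ps1 H c d v) v :=
    (hasDerivAt_ph1 hW).comp v (hasDerivAt_Wf_v hv)
  have h := (hA.mul_const ((ps1 H c d u)^2)).add (hB.mul_const (ps2 H c d u))
  exact h.congr_deriv (by simp only [g21])

lemma hasDerivAt_g21_v (hv : c*v+d ≠ 0) (hW : Wf H c d u v ≠ 0) :
    HasDerivAt (fun y => g21 H K c d u y) (g22 H K c d u v) v := by
  have hA : HasDerivAt (fun y => ph3 K (Wf H c d u y)) (ph4 K (Wf H c d u v) * ps1 H c d v) v :=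
    (hasDerivAt_ph3 hW).comp v (hasDerivAt_Wf_v hv)
  have hB : HasDerivAt (fun y => ph2 K (Wf H c d u y)) (ph3 K (Wf H c d u v) * ps1 H c d v) v :=
    (hasDerivAt_ph2 hW).comp v (hasDerivAt_Wf_v hv)
  have h := (((hA.mul (hasDerivAt_ps1 (H := H) hv)).mul_const ((ps1 H c d u)^2)).add
    ((hB.mul (hasDerivAt_ps1 (H := H) hv)).mul_const (ps2 H c d u)))
  exact h.congr_deriv (by simp only [g22]; ring)

end derivs

/-! ### Mean value tools -/

lemma lipschitz_of_deriv_bound (f f' : ℝ → ℝ) (a b C : ℝ)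
    (hd : ∀ x ∈ Icc a b, HasDerivAt f (f' x) x)
    (hC : ∀ x ∈ Icc a b, |f' x| ≤ C) :
    ∀ x ∈ Icc a b, ∀ y ∈ Icc a b, |f x - f y| ≤ C * |x - y| := by
  intro x hx y hy
  have := Convex.norm_image_sub_le_of_norm_hasDerivWithin_le
    (fun z hz => (hd z hz).hasDerivWithinAt) hC (convex_Icc a b) hy hx
  simpa [Real.norm_eq_abs, abs_sub_comm] using this

lemma abs_second_diff_le (f f' : ℝ → ℝ) (t h L : ℝ) (hh : 0 < h) (hL : 0 ≤ L)
    (hd : ∀ x ∈ Icc (t-h) (t+h), HasDerivAt f (f' x) x)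
    (hlip : ∀ x ∈ Icc (t-h) (t+h), ∀ y ∈ Icc (t-h) (t+h), |f' x - f' y| ≤ L * |x - y|) :
    |f (t+h) + f (t-h) - 2 * f t| ≤ 2 * L * h^2 := by
  obtain ⟨ξ, hξ, hξeq⟩ := exists_hasDerivAt_eq_slope f f' (by linarith : t < t+h)
    (fun x hx => (hd x ⟨by linarith [hx.1], le_of_le_of_eq hx.2 rfl⟩).continuousAt.continuousWithinAt)
    (fun x hx => hd x ⟨by linarith [hx.1.le], hx.2.le⟩)
  obtain ⟨ζ, hζ, hζeq⟩ := exists_hasDerivAt_eq_slope f f' (by linarith : t-h < t)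
    (fun x hx => (hd x ⟨hx.1, by linarith [hx.2]⟩).continuousAt.continuousWithinAt)
    (fun x hx => hd x ⟨hx.1.le, by linarith [hx.2.le]⟩)
  have hne : h ≠ 0 := ne_of_gt hh
  have e1 : f (t+h) - f t = f' ξ * h := by
    rw [hξeq, show t + h - t = h by ring]; field_simp
  have e2 : f t - f (t-h) = f' ζ * h := by
    rw [hζeq, show t - (t - h) = h by ring]; field_simp
  have key : f (t+h) + f (t-h) - 2 * f t = (f' ξ - f' ζ) * h := by
    nlinarith [e1, e2]
  rw [key, abs_mul, abs_of_pos hh]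
  have hmem1 : ξ ∈ Icc (t-h) (t+h) := ⟨by linarith [hξ.1], hξ.2.le⟩
  have hmem2 : ζ ∈ Icc (t-h) (t+h) := ⟨hζ.1.le, by linarith [hζ.2]⟩
  have := hlip ξ hmem1 ζ hmem2
  have habs : |ξ - ζ| ≤ 2*h := by
    rw [abs_le]; constructor <;> [linarith [hξ.1, hζ.2]; linarith [hξ.2, hζ.1]]
  have s1 : L * |ξ - ζ| ≤ L * (2*h) := mul_le_mul_of_nonneg_left habs hL
  have s2 : |f' ξ - f' ζ| * h ≤ (L * (2*h)) * h :=
    mul_le_mul (le_trans this s1) le_rfl hh.le (by positivity)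
  nlinarith [s2]

/-! ### Uniform bound for the fourth mixed derivative -/

lemma g22_bound (H K c d : ℝ) (hc : 0 < c) (hd : 0 < d) :
    ∃ C : ℝ, 0 ≤ C ∧ ∀ u ∈ Icc (0:ℝ) 1, ∀ v ∈ Icc (0:ℝ) 1, |g22 H K c d u v| ≤ C := by
  set T : Set (ℝ×ℝ) := (Icc (0:ℝ) 1) ×ˢ (Icc (0:ℝ) 1) with hT
  have hpos1 : ∀ p ∈ T, 0 < c * p.1 + d := by
    rintro p ⟨hp1, -⟩
    have := hp1.1
    nlinarith
  have hpos2 : ∀ p ∈ T, 0 < c * p.2 + d := by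
    rintro p ⟨-, hp2⟩
    have := hp2.1
    nlinarith
  have h1 : ∀ q : ℝ, ContinuousOn (fun p : ℝ×ℝ => (c*p.1+d) ^ q) T := fun q =>
    (((continuous_const.mul continuous_fst).add continuous_const).continuousOn).rpow_const
      (fun p hp => Or.inl (ne_of_gt (hpos1 p hp)))
  have h2 : ∀ q : ℝ, ContinuousOn (fun p : ℝ×ℝ => (c*p.2+d) ^ q) T := fun q =>
    (((continuous_const.mul continuous_snd).add continuous_const).continuousOn).rpow_const
      (fun p hp => Or.inl (ne_of_gt (hpos2 p hp)))
  have hW : ContinuousOn (fun p : ℝ×ℝ => Wf H c d p.1 p.2) T := (h1 (2*H)).add (h2 (2*H))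
  have hWne : ∀ p ∈ T, Wf H c d p.1 p.2 ≠ 0 := by
    intro p hp
    have := Real.rpow_pos_of_pos (hpos1 p hp) (2*H)
    have := Real.rpow_pos_of_pos (hpos2 p hp) (2*H)
    unfold Wf; positivity
  have hWq : ∀ q : ℝ, ContinuousOn (fun p : ℝ×ℝ => (Wf H c d p.1 p.2) ^ q) T := fun q =>
    hW.rpow_const (fun p hp => Or.inl (hWne p hp))
  have hps1u : ContinuousOn (fun p : ℝ×ℝ => ps1 H c d p.1) T := by
    unfold ps1; exact (continuousOn_const.mul (h1 (2*H-1))).mul continuousOn_const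
  have hps1v : ContinuousOn (fun p : ℝ×ℝ => ps1 H c d p.2) T := by
    unfold ps1; exact (continuousOn_const.mul (h2 (2*H-1))).mul continuousOn_const
  have hps2u : ContinuousOn (fun p : ℝ×ℝ => ps2 H c d p.1) T := by
    unfold ps2
    exact (continuousOn_const.mul ((continuousOn_const.mul (h1 (2*H-2))).mul
      continuousOn_const)).mul continuousOn_const
  have hps2v : ContinuousOn (fun p : ℝ×ℝ => ps2 H c d p.2) T := by
    unfold ps2
    exact (continuousOn_const.mul ((continuousOn_const.mul (h2 (2*H-2))).mul
      continuousOn_const)).mul continuousOn_const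
  have hph2 : ContinuousOn (fun p : ℝ×ℝ => ph2 K (Wf H c d p.1 p.2)) T := by
    unfold ph2
    exact continuousOn_const.mul (continuousOn_const.mul (continuousOn_const.mul (hWq (K-2))))
  have hph3 : ContinuousOn (fun p : ℝ×ℝ => ph3 K (Wf H c d p.1 p.2)) T := by
    unfold ph3
    exact continuousOn_const.mul (continuousOn_const.mul (continuousOn_const.mul
      (continuousOn_const.mul (hWq (K-3)))))
  have hph4 : ContinuousOn (fun p : ℝ×ℝ => ph4 K (Wf H c d p.1 p.2)) T := by
    unfold ph4
    exact continuousOn_const.mul (continuousOn_const.mul (continuousOn_const.mul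
      (continuousOn_const.mul (continuousOn_const.mul (hWq (K-4))))))
  have hg22 : ContinuousOn (fun p : ℝ×ℝ => g22 H K c d p.1 p.2) T := by
    unfold g22
    exact ((((hph4.mul (hps1v.pow 2)).mul (hps1u.pow 2)).add
      ((hph3.mul hps2v).mul (hps1u.pow 2))).add
      ((hph3.mul (hps1v.pow 2)).mul hps2u)).add ((hph2.mul hps2v).mul hps2u)
  obtain ⟨C, hC⟩ := (isCompact_Icc.prod isCompact_Icc).exists_bound_of_continuousOn hg22
  refine ⟨max C 0, le_max_right _ _, fun u hu v hv => ?_⟩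
  have := hC (u, v) ⟨hu, hv⟩
  simp only [Real.norm_eq_abs] at this
  exact le_trans this (le_max_left _ _)

/-! ### Core estimate for the smooth part -/

lemma core_bound (H K c d : ℝ) (hc : 0 < c) (hd : 0 < d) :
    ∃ C : ℝ, 0 ≤ C ∧ ∀ h t : ℝ, 0 < h → h ≤ t → t ≤ 1 - h →
      |(gsm H K c d (t+h) (t+h) + gsm H K c d (t+h) (t-h) - 2 * gsm H K c d (t+h) t)
        + (gsm H K c d (t-h) (t+h) + gsm H K c d (t-h) (t-h) - 2 * gsm H K c d (t-h) t)
        - 2 * (gsm H K c d t (t+h) + gsm H K c d t (t-h) - 2 * gsm H K c d t t)|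
        ≤ C * h^4 := by
  obtain ⟨C4, hC40, hC4⟩ := g22_bound H K c d hc hd
  refine ⟨4 * C4, by positivity, fun h t hh ht1 ht2 => ?_⟩
  have hsubset : Icc (t-h) (t+h) ⊆ Icc (0:ℝ) 1 := by
    intro x hx
    exact ⟨by linarith [hx.1], by linarith [hx.2]⟩
  have hmemp : t + h ∈ Icc (0:ℝ) 1 := ⟨by linarith, by linarith⟩
  have hmemm : t - h ∈ Icc (0:ℝ) 1 := ⟨by linarith, by linarith⟩
  have hmemt : t ∈ Icc (0:ℝ) 1 := ⟨by linarith, by linarith⟩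
  have hne : ∀ x ∈ Icc (0:ℝ) 1, c * x + d ≠ 0 := by
    intro x hx
    have := hx.1
    nlinarith
  have hWpos : ∀ x ∈ Icc (0:ℝ) 1, ∀ y ∈ Icc (0:ℝ) 1, Wf H c d x y ≠ 0 := by
    intro x hx y hy
    have h1 : 0 < c * x + d := by nlinarith [hx.1]
    have h2 : 0 < c * y + d := by nlinarith [hy.1]
    have := Real.rpow_pos_of_pos h1 (2*H)
    have := Real.rpow_pos_of_pos h2 (2*H)
    unfold Wf; positivity
  -- inner bound: second difference in v of g20
  have hinner : ∀ u ∈ Icc (0:ℝ) 1,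
      |g20 H K c d u (t+h) + g20 H K c d u (t-h) - 2 * g20 H K c d u t| ≤ 2 * C4 * h^2 := by
    intro u hu
    refine abs_second_diff_le (fun y => g20 H K c d u y) (fun y => g21 H K c d u y) t h C4 hh hC40
      (fun y hy => hasDerivAt_g20_v (hne y (hsubset hy)) (hWpos u hu y (hsubset hy)))
      (lipschitz_of_deriv_bound _ (fun y => g22 H K c d u y) (t-h) (t+h) C4
        (fun y hy => hasDerivAt_g21_v (hne y (hsubset hy)) (hWpos u hu y (hsubset hy)))
        (fun y hy => hC4 u hu y (hsubset hy)))
  -- derivative structure of the u-direction differences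
  have hF : ∀ u ∈ Icc (t-h) (t+h),
      HasDerivAt (fun x => gsm H K c d x (t+h) + gsm H K c d x (t-h) - 2 * gsm H K c d x t)
        (g10 H K c d u (t+h) + g10 H K c d u (t-h) - 2 * g10 H K c d u t) u := by
    intro u hu
    have hu' := hsubset hu
    exact ((hasDerivAt_gsm_u (hne u hu') (hWpos u hu' _ hmemp)).add
      (hasDerivAt_gsm_u (hne u hu') (hWpos u hu' _ hmemm))).sub
      ((hasDerivAt_gsm_u (hne u hu') (hWpos u hu' _ hmemt)).const_mul 2)
  have hF1 : ∀ u ∈ Icc (t-h) (t+h),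
      HasDerivAt (fun x => g10 H K c d x (t+h) + g10 H K c d x (t-h) - 2 * g10 H K c d x t)
        (g20 H K c d u (t+h) + g20 H K c d u (t-h) - 2 * g20 H K c d u t) u := by
    intro u hu
    have hu' := hsubset hu
    exact ((hasDerivAt_g10_u (hne u hu') (hWpos u hu' _ hmemp)).add
      (hasDerivAt_g10_u (hne u hu') (hWpos u hu' _ hmemm))).sub
      ((hasDerivAt_g10_u (hne u hu') (hWpos u hu' _ hmemt)).const_mul 2)
  have hlipF1 := lipschitz_of_deriv_bound
    (fun x => g10 H K c d x (t+h) + g10 H K c d x (t-h) - 2 * g10 H K c d x t)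
    (fun u => g20 H K c d u (t+h) + g20 H K c d u (t-h) - 2 * g20 H K c d u t)
    (t-h) (t+h) (2 * C4 * h^2) hF1 (fun u hu => hinner u (hsubset hu))
  have hmain := abs_second_diff_le
    (fun x => gsm H K c d x (t+h) + gsm H K c d x (t-h) - 2 * gsm H K c d x t)
    (fun u => g10 H K c d u (t+h) + g10 H K c d u (t-h) - 2 * g10 H K c d u t)
    t h (2 * C4 * h^2) hh (by positivity) hF hlipF1
  calc _ ≤ 2 * (2 * C4 * h^2) * h^2 := hmain
    _ = 4 * C4 * h^4 := by ring

/-! ### Decomposition of the rescaled covariance -/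

lemma bifbm_decomp (H K T₁ T₂ : ℝ) (hc : 0 < T₂ - T₁) (u v : ℝ) :
    bifbmCovRescaled H K T₁ T₂ u v
      = gsm H K (T₂-T₁) T₁ u v
        - (2:ℝ)^(-K) * ((T₂-T₁) ^ (2*H*K) * |u-v| ^ (2*H*K)) := by
  unfold bifbmCovRescaled bifbmCov gsm Wf
  rw [show (T₂-T₁)*u + T₁ - ((T₂-T₁)*v + T₁) = (T₂-T₁)*(u-v) by ring, abs_mul,
    abs_of_pos hc, Real.mul_rpow hc.le (abs_nonneg _)]
  ring

theorem bifbm_diag_expansion (H K T₁ T₂ : ℝ) (hH0 : 0 < H) (hH1 : H < 1)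
    (hK0 : 0 < K) (hK1 : K < 1) (hT1 : 0 < T₁) (hT : T₁ < T₂) :
    ∃ M : ℝ, ∃ h₀ > (0 : ℝ), ∀ h : ℝ, 0 < h → h ≤ h₀ → ∀ t : ℝ, h ≤ t → t ≤ 1 - h →
      |h ^ (-(2 * H * K))
          * delta1 (fun s t' => delta2 (bifbmCovRescaled H K T₁ T₂) h s t') h t t
        - (T₂ - T₁) ^ (2 * H * K) * (4 - 2 ^ (2 * H * K)) * 2 ^ (1 - K)|
        ≤ M * h ^ (4 - 2 * H * K) := by
  have hc : 0 < T₂ - T₁ := by linarith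
  obtain ⟨C, hC0, hcore⟩ := core_bound H K (T₂-T₁) T₁ hc hT1
  refine ⟨C, 1, one_pos, fun h hh hh1 t ht1 ht2 => ?_⟩
  have hspos : 0 < 2*H*K := by positivity
  set c := T₂ - T₁ with hcdef
  set D := (gsm H K c T₁ (t+h) (t+h) + gsm H K c T₁ (t+h) (t-h) - 2 * gsm H K c T₁ (t+h) t)
        + (gsm H K c T₁ (t-h) (t+h) + gsm H K c T₁ (t-h) (t-h) - 2 * gsm H K c T₁ (t-h) t)
        - 2 * (gsm H K c T₁ t (t+h) + gsm H K c T₁ t (t-h) - 2 * gsm H K c T₁ t t) with hD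
  have r1 : t + h - (t + h) = 0 := by ring
  have r2 : t + h - (t - h) = 2*h := by ring
  have r3 : t + h - t = h := by ring
  have r4 : t - h - (t + h) = -(2*h) := by ring
  have r5 : t - h - (t - h) = 0 := by ring
  have r6 : t - h - t = -h := by ring
  have r7 : t - (t + h) = -h := by ring
  have r8 : t - (t - h) = h := by ring
  have a1 : |2*h| = 2*h := abs_of_pos (by linarith)
  have a2 : |h| = h := abs_of_pos hh
  have z0 : (0:ℝ) ^ (2*H*K) = 0 := Real.zero_rpow (ne_of_gt hspos)
  have m1 : (2*h) ^ (2*H*K) = 2 ^ (2*H*K) * h ^ (2*H*K) :=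
    Real.mul_rpow (by norm_num) hh.le
  have hE : delta1 (fun s t' => delta2 (bifbmCovRescaled H K T₁ T₂) h s t') h t t
      = D + (2:ℝ)^(-K) * c ^ (2*H*K)
            * (8 * h ^ (2*H*K) - 2 * (2 ^ (2*H*K) * h ^ (2*H*K))) := by
    simp only [delta1, delta2, bifbm_decomp H K T₁ T₂ hc, r1, r2, r3, r4, r5, r6, r7, r8,
      sub_self, abs_neg, abs_zero, a1, a2, z0, m1, hD, ← hcdef]
    ring
  have hinv : h ^ (-(2*H*K)) * h ^ (2*H*K) = 1 := by
    rw [← Real.rpow_add hh]; simp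
  have h2K : (2:ℝ) ^ (1-K) = 2 * 2 ^ (-K) := by
    rw [show (1-K:ℝ) = 1 + (-K) by ring, Real.rpow_add (by norm_num), Real.rpow_one]
  have key : h ^ (-(2 * H * K))
          * delta1 (fun s t' => delta2 (bifbmCovRescaled H K T₁ T₂) h s t') h t t
        - (T₂ - T₁) ^ (2 * H * K) * (4 - 2 ^ (2 * H * K)) * 2 ^ (1 - K)
      = h ^ (-(2*H*K)) * D := by
    rw [hE, h2K, ← hcdef]
    linear_combination ((2:ℝ)^(-K) * c ^ (2*H*K) * (8 - 2 * 2 ^ (2*H*K))) * hinv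
  rw [key]
  have hcoreD : |D| ≤ C * h^4 := hcore h t hh ht1 ht2
  have hrp : 0 < h ^ (-(2*H*K)) := Real.rpow_pos_of_pos hh _
  rw [abs_mul, abs_of_pos hrp]
  have step : h ^ (-(2*H*K)) * |D| ≤ h ^ (-(2*H*K)) * (C * h^4) :=
    mul_le_mul_of_nonneg_left hcoreD hrp.le
  refine le_trans step (le_of_eq ?_)
  have h4 : (h:ℝ)^(4:ℕ) = h ^ ((4:ℝ)) := by
    rw [← Real.rpow_natCast h 4]; norm_num
  rw [h4, show h ^ (-(2*H*K)) * (C * h ^ ((4:ℝ))) = C * (h ^ (-(2*H*K)) * h ^ ((4:ℝ))) by ring,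
    ← Real.rpow_add hh, show -(2*H*K) + 4 = 4 - 2*H*K by ring]
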